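/- Let P be a scale group acting on T_{q+1}. Then: (1) the only compact normal subgroup of P is the trivial subgroup; (2) P^(e) is an open normal subgroup of P, and the level-shift homomorphism n : P → ℤ is surjective with kernel P^(e) (so P/P^(e) ≅ ℤ); (3) V := Stab_P(ṽ₀) is a compact open subgroup of P and there exists x ∈ P with xVx⁻¹ ≤ V and ⋃_{n∈ℤ} xⁿVx⁻ⁿ = P^(e). -/

import Mathlib

namespace Scale

/-- A vertex of the `(q+1)`-regular tree `T_{q+1}`: a level `n ∈ ℤ` together with a
labelling `ℤ → Fin q` which vanishes above the level and for all sufficiently small indices. -/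
@[ext] structure Vertex (q : ℕ) where
  level : ℤ
  lab : ℤ → Fin q
  zero_gt : ∀ i : ℤ, level < i → (lab i : ℕ) = 0
  bdd : ∃ N : ℤ, ∀ i : ℤ, i < N → (lab i : ℕ) = 0

namespace Vertex

variable {q : ℕ} [NeZero q]

/-- The parent `v⁺` of a vertex. -/
def parent (v : Vertex q) : Vertex q where
  level := v.level - 1
  lab := fun i => if v.level - 1 < i then 0 else v.lab i
  zero_gt := by intro i hi; simp [hi]
  bdd := by
    obtain ⟨N, hN⟩ := v.bdd
    refine ⟨N, fun i hi => ?_⟩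
    by_cases h : v.level - 1 < i
    · simp [h]
    · simp [h, hN i hi]

/-- The child `vj` of a vertex `v`. -/
def child (v : Vertex q) (j : Fin q) : Vertex q where
  level := v.level + 1
  lab := fun i => if i = v.level + 1 then j else v.lab i
  zero_gt := by
    intro i hi
    have h1 : i ≠ v.level + 1 := by omega
    simp [h1, v.zero_gt i (by omega)]
  bdd := by
    obtain ⟨N, hN⟩ := v.bdd
    refine ⟨min N (v.level + 1), fun i hi => ?_⟩
    have h1 : i < N := lt_of_lt_of_le hi (min_le_left _ _)
    have h2 : i < v.level + 1 := lt_of_lt_of_le hi (min_le_right _ _)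
    have h3 : i ≠ v.level + 1 := by omega
    simp [h3, hN i h1]

/-- The restriction `w|_m` of a vertex to level `m`. -/
def trunc (v : Vertex q) (m : ℤ) : Vertex q where
  level := m
  lab := fun i => if m < i then 0 else v.lab i
  zero_gt := by intro i hi; simp [hi]
  bdd := by
    obtain ⟨N, hN⟩ := v.bdd
    refine ⟨N, fun i hi => ?_⟩
    by_cases h : m < i
    · simp [h]
    · simp [h, hN i hi]

/-- `w` is a descendant of `u` (in the rooted subtree `T_u`). -/
def Descendant (u w : Vertex q) : Prop := u.level ≤ w.level ∧ trunc w u.level = u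

end Vertex

/-- The all-zero vertex `ṽ_n` at level `n`. -/
def zeroVtx (q : ℕ) [NeZero q] (n : ℤ) : Vertex q where
  level := n
  lab := fun _ => 0
  zero_gt := by intro i _; simp
  bdd := ⟨0, by intro i _; simp⟩

/-- The map shifting all labels by `k` (a translation towards the end `ω` when `k > 0`). -/
def shiftMap {q : ℕ} (k : ℤ) (v : Vertex q) : Vertex q where
  level := v.level + k
  lab := fun i => v.lab (i - k)
  zero_gt := fun i hi => v.zero_gt (i - k) (by omega)
  bdd := by
    obtain ⟨N, hN⟩ := v.bdd
    exact ⟨N + k, fun i hi => hN (i - k) (by omega)⟩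

/-- The translation `x̃₀ᵏ` of `T_{q+1}` as a permutation of the vertices. -/
def shiftPerm (q : ℕ) (k : ℤ) : Equiv.Perm (Vertex q) where
  toFun := shiftMap k
  invFun := shiftMap (-k)
  left_inv := by
    intro v
    refine Vertex.ext ?_ ?_
    · show v.level + k + -k = v.level
      omega
    · funext i
      show v.lab (i - -k - k) = v.lab i
      congr 1
      omega
  right_inv := by
    intro v
    refine Vertex.ext ?_ ?_
    · show v.level + -k + k = v.level
      omega
    · funext i
      show v.lab (i - k - -k) = v.lab i
      congr 1
      omega

/-- The group `Isom(T_{q+1})_ω` of tree automorphisms fixing the distinguished end `ω`,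
realised as the subgroup of permutations of the vertex set commuting with `parent`. -/
def IsomOmega (q : ℕ) [NeZero q] : Subgroup (Equiv.Perm (Vertex q)) where
  carrier := {x | ∀ v : Vertex q, x (Vertex.parent v) = Vertex.parent (x v)}
  one_mem' := fun _ => rfl
  mul_mem' := by
    intro a b ha hb v
    show (a * b) (Vertex.parent v) = Vertex.parent ((a * b) v)
    rw [Equiv.Perm.mul_apply, Equiv.Perm.mul_apply, hb, ha]
  inv_mem' := by
    intro a ha v
    show a⁻¹ (Vertex.parent v) = Vertex.parent (a⁻¹ v)
    have h := ha (a⁻¹ v)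
    rw [show ∀ x, a (a⁻¹ x) = x from fun x => (Equiv.eq_symm_apply a).mp rfl] at h
    rw [← h, show ∀ x, a⁻¹ (a x) = x from fun x => Equiv.Perm.inv_eq_iff_eq.mpr rfl]

/-- The level shift `n(x)` of an automorphism (evaluated at the zero vertex; for members
of `IsomOmega q` the shift is the same at every vertex). -/
def lshift {q : ℕ} [NeZero q] (x : Equiv.Perm (Vertex q)) : ℤ := (x (zeroVtx q 0)).level

/-- An automorphism is elliptic if it fixes a vertex. -/
def Elliptic {q : ℕ} (x : Equiv.Perm (Vertex q)) : Prop := ∃ v : Vertex q, x v = v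

/-- Topology of pointwise convergence on `X → X` for `X` discrete. -/
def funTop (X : Type*) : TopologicalSpace (X → X) :=
  @Pi.topologicalSpace X (fun _ => X) (fun _ => ⊥)

/-- The permutation topology on `Equiv.Perm X`: pointwise stabilisers of finite sets of
points form a neighbourhood basis of the identity. -/
def permTop (X : Type*) : TopologicalSpace (Equiv.Perm X) :=
  @TopologicalSpace.induced (Equiv.Perm X) ((X → X) × (X → X))
    (fun g => ((g : X → X), ((g⁻¹ : Equiv.Perm X) : X → X)))
    (@instTopologicalSpaceProd _ _ (funTop X) (funTop X))

instance (q : ℕ) : TopologicalSpace (Equiv.Perm (Vertex q)) := permTop _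

instance (q : ℕ) : TopologicalSpace (Equiv.Perm (List (Fin q))) := permTop _

/-- A scale group: a closed subgroup of `Isom(T_{q+1})_ω` acting transitively on vertices. -/
def IsScaleGroup {q : ℕ} [NeZero q] (P : Subgroup (Equiv.Perm (Vertex q))) : Prop :=
  P ≤ IsomOmega q ∧ IsClosed (P : Set (Equiv.Perm (Vertex q))) ∧
    ∀ v w : Vertex q, ∃ x ∈ P, x v = w

/-- The stabiliser of the vertex `v` in `P`, as a subgroup of the ambient permutation group. -/
def stabIn {q : ℕ} (P : Subgroup (Equiv.Perm (Vertex q))) (v : Vertex q) :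
    Subgroup (Equiv.Perm (Vertex q)) where
  carrier := {g | g ∈ P ∧ g v = v}
  one_mem' := ⟨P.one_mem, rfl⟩
  mul_mem' := by
    intro a b ha hb
    exact ⟨P.mul_mem ha.1 hb.1, by rw [Equiv.Perm.mul_apply, hb.2, ha.2]⟩
  inv_mem' := by
    intro a ha
    refine ⟨P.inv_mem ha.1, ?_⟩
    rw [Equiv.Perm.inv_eq_iff_eq]
    exact ha.2.symm

/-- The conjugate subgroup `xVx⁻¹`. -/
def conjSub {G : Type*} [Group G] (x : G) (V : Subgroup G) : Subgroup G :=
  V.map (MulAut.conj x).toMonoidHom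

/-- The vertex `ξ|_m` on the ray towards the end represented by `ξ`. -/
def ray (q : ℕ) [NeZero q] (ξ : ℤ → Fin q) (N : ℤ) (hξ : ∀ i : ℤ, i < N → (ξ i : ℕ) = 0)
    (m : ℤ) : Vertex q where
  level := m
  lab := fun i => if m < i then 0 else ξ i
  zero_gt := by intro i hi; simp [hi]
  bdd := by
    refine ⟨N, fun i hi => ?_⟩
    by_cases h : m < i
    · simp [h]
    · simp [h, hξ i hi]

/-- The contraction group of `x` in `P`. -/
def conSet {q : ℕ} (P : Subgroup (Equiv.Perm (Vertex q))) (x : Equiv.Perm (Vertex q)) :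
    Set (Equiv.Perm (Vertex q)) :=
  {g | g ∈ P ∧ ∀ v : Vertex q, ∃ N : ℕ, ∀ n : ℕ, N ≤ n → (x ^ n * g * (x ^ n)⁻¹) v = v}


/-- `c` is a `P`-labelling of `T_{q+1}` with distinguished bi-infinite path `vp`:
each `c v` is a bijection from the directed edges out of `v` (encoded as the
neighbours of `v`) to `{0, …, q}`; the edge towards the parent is labelled `q`;
along the path `vp` the downward edges are labelled `0`; and `P` contains, for
all `u₁, u₂`, an element carrying `u₁` to `u₂` and preserving the labels on the
rooted subtree of descendants of `u₁`. -/
def IsPLabelling {q : ℕ} [NeZero q] (P : Subgroup (Equiv.Perm (Vertex q)))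
    (c : Vertex q → Vertex q → Fin (q + 1)) (vp : ℤ → Vertex q) : Prop :=
  (∀ v : Vertex q, ∀ j : Fin (q + 1),
      ∃! w : Vertex q, (Vertex.parent w = v ∨ w = Vertex.parent v) ∧ c v w = j) ∧
  (∀ v : Vertex q, (c v (Vertex.parent v) : ℕ) = q) ∧
  (∀ n : ℤ, Vertex.parent (vp (n + 1)) = vp n) ∧
  (∀ n : ℤ, (c (vp n) (vp (n + 1)) : ℕ) = 0) ∧
  (∀ u₁ u₂ : Vertex q, ∃ x, x ∈ P ∧ x u₁ = u₂ ∧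
    ∀ w w' : Vertex q, Vertex.Descendant u₁ w → Vertex.Descendant u₁ w' →
      (Vertex.parent w = w' ∨ Vertex.parent w' = w) → c (x w) (x w') = c w w')

open Classical in
/-- The standard labelling of `T_{q+1}`: the edge from `v` to its child `vj` is
labelled `j` and the edge towards the parent is labelled `q`. -/
noncomputable def stdLabel (q : ℕ) [NeZero q] : Vertex q → Vertex q → Fin (q + 1) :=
  fun v w =>
    if Vertex.parent w = v then Fin.castLE (Nat.le_succ q) (w.lab (v.level + 1))
    else Fin.last q

/-- Convert an edge label in `{0,…,q}` known to be `< q` into a letter in `{0,…,q-1}`. -/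
def toFinQ {q : ℕ} [NeZero q] (j : Fin (q + 1)) : Fin q :=
  if h : (j : ℕ) < q then ⟨j, h⟩ else ⟨0, Nat.pos_of_ne_zero (NeZero.ne q)⟩

/-- The string of labels read along the downward path of length `d` ending at `w`. -/
def labelString {q : ℕ} [NeZero q] (c : Vertex q → Vertex q → Fin (q + 1)) :
    Vertex q → ℕ → List (Fin q)
  | _, 0 => []
  | w, (d + 1) => labelString c (Vertex.parent w) d ++ [toFinQ (c (Vertex.parent w) w)]

/-- The isomorphism `φ^c_v : T_v → T_{q,q}` given by a labelling `c`: a descendant `w`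
of `v` is sent to the string of labels along the path from `v` down to `w`. -/
def phiStr {q : ℕ} [NeZero q] (c : Vertex q → Vertex q → Fin (q + 1)) (v w : Vertex q) :
    List (Fin q) :=
  labelString c w ((w.level - v.level).toNat)

/-- The set `P|_v = {φ^c_{x(v)} ∘ x ∘ (φ^c_v)⁻¹ : x ∈ P}` of sections of elements of `P`
at the vertex `v`, with respect to the labelling `c`. -/
def sectSet {q : ℕ} [NeZero q] (P : Subgroup (Equiv.Perm (Vertex q)))
    (c : Vertex q → Vertex q → Fin (q + 1)) (v : Vertex q) :
    Set (Equiv.Perm (List (Fin q))) :=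
  {g | ∃ x, x ∈ P ∧ ∀ w : Vertex q, Vertex.Descendant v w →
        g (phiStr c v w) = phiStr c (x v) (x w)}

/-- The standard isomorphism `φ_v : T_v → T_{q,q}`: a descendant `w` of `v` of level `m`
is sent to the string `(w_{n+1}, …, w_m)` where `n` is the level of `v`. -/
def stdStr {q : ℕ} (v w : Vertex q) : List (Fin q) :=
  (List.range (w.level - v.level).toNat).map fun k => w.lab (v.level + 1 + k)

/-- The set `{φ_{x(v)} ∘ x ∘ φ_v⁻¹ : x ∈ P}` with respect to the standard isomorphisms. -/
def stdSect {q : ℕ} [NeZero q] (P : Subgroup (Equiv.Perm (Vertex q))) (v : Vertex q) :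
    Set (Equiv.Perm (List (Fin q))) :=
  {g | ∃ x, x ∈ P ∧ ∀ w : Vertex q, Vertex.Descendant v w →
        g (stdStr v w) = stdStr (x v) (x w)}

/-- `Isom(T_{q,q})`: the group of permutations of the set of finite strings over
`{0,…,q-1}` preserving length and the prefix relation. -/
def RIsom (q : ℕ) : Subgroup (Equiv.Perm (List (Fin q))) where
  carrier := {g | (∀ l : List (Fin q), (g l).length = l.length) ∧
    ∀ l₁ l₂ : List (Fin q), l₁ <+: l₂ → g l₁ <+: g l₂}
  one_mem' := ⟨fun _ => rfl, fun _ _ h => h⟩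
  mul_mem' := by
    intro a b ha hb
    constructor
    · intro l
      rw [Equiv.Perm.mul_apply, ha.1, hb.1]
    · intro l₁ l₂ h
      rw [Equiv.Perm.mul_apply, Equiv.Perm.mul_apply]
      exact ha.2 _ _ (hb.2 _ _ h)
  inv_mem' := by
    intro a ha
    have hlen : ∀ l : List (Fin q), (a⁻¹ l).length = l.length := by
      intro l
      have h := ha.1 (a⁻¹ l)
      rw [show ∀ x, a (a⁻¹ x) = x from fun x => (Equiv.eq_symm_apply a).mp rfl] at h
      exact h.symm
    refine ⟨hlen, ?_⟩
    intro l₁ l₂ h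
    have htake : List.take (a⁻¹ l₁).length (a⁻¹ l₂) <+: a⁻¹ l₂ := List.take_prefix _ _
    have h2 : a (List.take (a⁻¹ l₁).length (a⁻¹ l₂)) <+: a (a⁻¹ l₂) := ha.2 _ _ htake
    rw [show ∀ x, a (a⁻¹ x) = x from fun x => (Equiv.eq_symm_apply a).mp rfl] at h2
    have hle : l₁.length ≤ l₂.length := h.length_le
    have hlen3 : (a (List.take (a⁻¹ l₁).length (a⁻¹ l₂))).length = l₁.length := by
      rw [ha.1, List.length_take, hlen, hlen]
      omega
    have hpre : a (List.take (a⁻¹ l₁).length (a⁻¹ l₂)) <+: l₁ :=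
      List.prefix_of_prefix_length_le h2 h (le_of_eq hlen3)
    have heq : a (List.take (a⁻¹ l₁).length (a⁻¹ l₂)) = l₁ := hpre.eq_of_length hlen3
    have heq2 : List.take (a⁻¹ l₁).length (a⁻¹ l₂) = a⁻¹ l₁ := by
      apply a.injective
      rw [heq, show ∀ x, a (a⁻¹ x) = x from fun x => (Equiv.eq_symm_apply a).mp rfl]
    rw [← heq2]
    exact List.take_prefix _ _

/-- A subgroup of `Isom(T_{q,q})` is self-replicating if it is self-similar, transitive
on level 1, and all the section homomorphisms `g ↦ g|_w` are surjective. -/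
def SelfReplicating {q : ℕ} (G : Subgroup (Equiv.Perm (List (Fin q)))) : Prop :=
  (∀ w : List (Fin q), ∀ g, g ∈ G → g w = w →
      ∃ g', g' ∈ G ∧ ∀ v : List (Fin q), g (w ++ v) = w ++ g' v) ∧
  (∀ j j' : Fin q, ∃ g ∈ G, g [j] = [j']) ∧
  (∀ w : List (Fin q), ∀ g', g' ∈ G →
      ∃ g, g ∈ G ∧ g w = w ∧ ∀ v : List (Fin q), g (w ++ v) = w ++ g' v)

/-- The stabiliser of the string `w` in `G ≤ Isom(T_{q,q})`, as a subgroup of `G`. -/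
def rstab {q : ℕ} (G : Subgroup (Equiv.Perm (List (Fin q)))) (w : List (Fin q)) :
    Subgroup G where
  carrier := {g | (g : Equiv.Perm (List (Fin q))) w = w}
  one_mem' := rfl
  mul_mem' := by
    intro a b ha hb
    show ((a * b : G) : Equiv.Perm (List (Fin q))) w = w
    rw [Subgroup.coe_mul, Equiv.Perm.mul_apply]
    rw [show (b : Equiv.Perm (List (Fin q))) w = w from hb,
      show (a : Equiv.Perm (List (Fin q))) w = w from ha]
  inv_mem' := by
    intro a ha
    show ((a⁻¹ : G) : Equiv.Perm (List (Fin q))) w = w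
    rw [Subgroup.coe_inv, Equiv.Perm.inv_eq_iff_eq]
    exact (show (a : Equiv.Perm (List (Fin q))) w = w from ha).symm


end Scale

/-!
An element of `Isom(T_{q+1})_ω` commutes with truncation, so it shifts every level by the
same amount `lshift`; it is elliptic exactly when this shift vanishes, and then it fixes `ṽ_m`
for all sufficiently small `m`. In the permutation topology `lshift` is locally constant, and an
element of a vertex stabiliser can move a vertex `w` only among the finitely many vertices
of its level below a common ancestor of `w` and the fixed vertex, so stabilisers in a closed
subgroup are compact. On a compact normal subgroup `N` the shift takes finitely many values
while `lshift (gⁿ) = n * lshift g`, so it vanishes; compactness then yields a common fixed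
vertex `ṽ_m`, and since `P` is vertex-transitive and normalises `N`, `N` fixes every vertex.
Finally an `x ∈ P` with `x ṽ₋₁ = ṽ₀` translates the ray `(ṽ_m)_{m ≤ 0}`, so for `n ≤ 0` the
conjugate `xⁿ V x⁻ⁿ` is the stabiliser of `ṽ_n`, and these exhaust the elliptic elements.
-/

namespace Scale

section PermTopology

attribute [local instance] funTop permTop

def permEmb (X : Type*) (g : Equiv.Perm X) : (X → X) × (X → X) :=
  ((g : X → X), ((g⁻¹ : Equiv.Perm X) : X → X))

variable {X : Type*}

lemma isOpen_setOf_apply_mem (x : X) (s : Set X) : IsOpen {g : Equiv.Perm X | g x ∈ s} := by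
  let _ : TopologicalSpace X := ⊥
  have : DiscreteTopology X := ⟨rfl⟩
  have : Continuous fun g : Equiv.Perm X => g x :=
    (continuous_apply x).comp (continuous_fst.comp (continuous_induced_dom (f := permEmb X)))
  exact (isOpen_discrete s).preimage this

lemma isOpen_setOf_apply_eq (x y : X) : IsOpen {g : Equiv.Perm X | g x = y} :=
  isOpen_setOf_apply_mem x {y}

lemma isClosed_setOf_apply_eq (x y : X) : IsClosed {g : Equiv.Perm X | g x = y} :=
  isOpen_compl_iff.mp (isOpen_setOf_apply_mem x {y}ᶜ)

lemma isClosed_range_permEmb : IsClosed (Set.range (permEmb X)) := by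
  let _ : TopologicalSpace X := ⊥
  have : DiscreteTopology X := ⟨rfl⟩
  have heval : Continuous fun p : (X → X) × X => p.1 p.2 :=
    continuous_prod_of_discrete_right.mpr fun y => continuous_apply y
  have hcomp₁ : ∀ x : X, Continuous fun p : (X → X) × (X → X) => p.1 (p.2 x) := fun x =>
    heval.comp (continuous_fst.prodMk ((continuous_apply x).comp continuous_snd))
  have hcomp₂ : ∀ x : X, Continuous fun p : (X → X) × (X → X) => p.2 (p.1 x) := fun x =>
    heval.comp (continuous_snd.prodMk ((continuous_apply x).comp continuous_fst))
  have hrange : Set.range (permEmb X) =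
      ⋂ x : X, ({p | p.1 (p.2 x) = x} ∩ {p | p.2 (p.1 x) = x}) := by
    ext p
    simp only [Set.mem_range, Set.mem_iInter, Set.mem_inter_iff, Set.mem_ofPred_eq]
    constructor
    · rintro ⟨g, rfl⟩ x
      exact ⟨g.apply_symm_apply x, g.symm_apply_apply x⟩
    · intro h
      exact ⟨⟨p.1, p.2, fun x => (h x).2, fun x => (h x).1⟩, rfl⟩
  rw [hrange]
  exact isClosed_iInter fun x =>
    (isClosed_eq (hcomp₁ x) continuous_const).inter (isClosed_eq (hcomp₂ x) continuous_const)

lemma isCompact_setOf_forall_apply_mem (O : X → Set X) (hO : ∀ x, (O x).Finite) :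
    IsCompact {g : Equiv.Perm X | ∀ x, g x ∈ O x ∧ g⁻¹ x ∈ O x} := by
  let _ : TopologicalSpace X := ⊥
  have hK : IsCompact (Set.univ.pi O ×ˢ Set.univ.pi O) :=
    (isCompact_univ_pi fun x => (hO x).isCompact).prod
      (isCompact_univ_pi fun x => (hO x).isCompact)
  have hset : {g : Equiv.Perm X | ∀ x, g x ∈ O x ∧ g⁻¹ x ∈ O x} =
      permEmb X ⁻¹' (Set.univ.pi O ×ˢ Set.univ.pi O) := by
    ext g
    simp [permEmb, forall_and]
  rw [hset]
  exact (Topology.IsInducing.mk (f := permEmb X) rfl).isCompact_preimage isClosed_range_permEmb hK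

end PermTopology

section Elliptic

variable {q : ℕ} {x : Equiv.Perm (Vertex q)}

lemma Elliptic.inv (hx : Elliptic x) : Elliptic x⁻¹ :=
  let ⟨v, hv⟩ := hx
  ⟨v, Equiv.Perm.inv_eq_iff_eq.mpr hv.symm⟩

lemma Elliptic.conj (hx : Elliptic x) (p : Equiv.Perm (Vertex q)) :
    Elliptic (p * x * p⁻¹) :=
  let ⟨v, hv⟩ := hx
  ⟨p v, by simp [hv]⟩

end Elliptic

section Stabiliser

variable {q : ℕ} {P : Subgroup (Equiv.Perm (Vertex q))}

lemma mem_stabIn {v : Vertex q} {g : Equiv.Perm (Vertex q)} :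
    g ∈ stabIn P v ↔ g ∈ P ∧ g v = v := Iff.rfl

lemma isOpen_stabIn (v : Vertex q) :
    IsOpen {p : P | (p : Equiv.Perm (Vertex q)) ∈ stabIn P v} := by
  have hset : {p : P | (p : Equiv.Perm (Vertex q)) ∈ stabIn P v} =
      Subtype.val ⁻¹' {g | g v = v} := by
    ext p
    exact and_iff_right p.2
  rw [hset]
  exact (isOpen_setOf_apply_eq v v).preimage continuous_subtype_val

lemma inv_mul_mul_mem_stabIn_iff {p g : Equiv.Perm (Vertex q)} (hp : p ∈ P) {v : Vertex q} :
    p⁻¹ * g * p ∈ stabIn P v ↔ g ∈ stabIn P (p v) := by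
  rw [mem_stabIn, mem_stabIn, P.mul_mem_cancel_right hp, P.mul_mem_cancel_left (P.inv_mem hp),
    Equiv.Perm.mul_apply, Equiv.Perm.mul_apply, Equiv.Perm.inv_eq_iff_eq]

end Stabiliser

variable {q : ℕ} [NeZero q]

@[simp] lemma level_zeroVtx (n : ℤ) : (zeroVtx q n).level = n := rfl

@[simp] lemma trunc_zeroVtx (n m : ℤ) : (zeroVtx q n).trunc m = zeroVtx q m := by
  refine Vertex.ext rfl (funext fun i => ?_)
  simp [Vertex.trunc, zeroVtx]

namespace Vertex

@[simp] lemma level_trunc (v : Vertex q) (m : ℤ) : (v.trunc m).level = m := rfl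

lemma lab_trunc_of_le (v : Vertex q) {m i : ℤ} (hi : i ≤ m) : (v.trunc m).lab i = v.lab i :=
  if_neg (not_lt.mpr hi)

lemma trunc_level (v : Vertex q) : v.trunc v.level = v := by
  refine Vertex.ext rfl (funext fun i => ?_)
  by_cases h : v.level < i
  · exact (if_pos h).trans (Fin.ext (v.zero_gt i h)).symm
  · exact if_neg h

lemma parent_trunc (v : Vertex q) (m : ℤ) : (v.trunc m).parent = v.trunc (m - 1) := by
  refine Vertex.ext rfl (funext fun i => ?_)
  show (if m - 1 < i then 0 else (v.trunc m).lab i) = (if m - 1 < i then 0 else v.lab i)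
  split_ifs with h
  · rfl
  · exact v.lab_trunc_of_le (by omega)

lemma iterate_parent (v : Vertex q) (k : ℕ) : parent^[k] v = v.trunc (v.level - k) := by
  induction k with
  | zero => simpa using v.trunc_level.symm
  | succ n ih =>
    rw [Function.iterate_succ_apply', ih, parent_trunc]
    congr 1
    push_cast
    ring

lemma iterate_parent_eq_trunc (v : Vertex q) {m : ℤ} (hm : m ≤ v.level) :
    parent^[(v.level - m).toNat] v = v.trunc m := by
  rw [iterate_parent]
  congr 1
  omega

lemma finite_setOf_level_eq_trunc_eq (n m : ℤ) (u : Vertex q) :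
    {w : Vertex q | w.level = n ∧ w.trunc m = u}.Finite := by
  have := (Set.finite_Icc (m + 1) n).to_subtype
  refine Set.Finite.of_finite_image (f := fun w (i : Set.Icc (m + 1) n) => w.lab i)
    (Set.toFinite _) ?_
  rintro w ⟨hw, hwu⟩ w' ⟨hw', hwu'⟩ h
  refine Vertex.ext (hw.trans hw'.symm) (funext fun i => ?_)
  by_cases hn : n < i
  · exact Fin.ext ((w.zero_gt i (by omega)).trans (w'.zero_gt i (by omega)).symm)
  by_cases hm : m + 1 ≤ i
  · exact congrFun h ⟨i, hm, by omega⟩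
  · rw [← w.lab_trunc_of_le (m := m) (by omega), ← w'.lab_trunc_of_le (m := m) (by omega),
      hwu, hwu']

lemma exists_forall_trunc_eq_zeroVtx (v : Vertex q) :
    ∃ M : ℤ, M ≤ v.level ∧ M ≤ 0 ∧ ∀ m ≤ M, v.trunc m = zeroVtx q m := by
  obtain ⟨N, hN⟩ := v.bdd
  refine ⟨min (min v.level 0) (N - 1), by omega, by omega, fun m hm => ?_⟩
  refine Vertex.ext rfl (funext fun i => ?_)
  by_cases h : m < i
  · exact if_pos h
  · exact (if_neg h).trans (Fin.ext (hN i (by omega)))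

lemma exists_trunc_eq_trunc (v w : Vertex q) :
    ∃ M : ℤ, M ≤ v.level ∧ M ≤ w.level ∧ v.trunc M = w.trunc M := by
  obtain ⟨M, hMv, -, hM⟩ := v.exists_forall_trunc_eq_zeroVtx
  obtain ⟨M', hM'w, -, hM'⟩ := w.exists_forall_trunc_eq_zeroVtx
  exact ⟨min M M', by omega, by omega,
    (hM _ (min_le_left _ _)).trans (hM' _ (min_le_right _ _)).symm⟩

end Vertex

open Vertex

namespace IsomOmega

variable {x : Equiv.Perm (Vertex q)}

lemma map_iterate_parent (hx : x ∈ IsomOmega q) (v : Vertex q) (k : ℕ) :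
    x (parent^[k] v) = parent^[k] (x v) := by
  induction k with
  | zero => rfl
  | succ n ih => rw [Function.iterate_succ_apply', Function.iterate_succ_apply', hx, ih]

lemma level_apply_trunc_sub (hx : x ∈ IsomOmega q) (v : Vertex q) {m : ℤ} (hm : m ≤ v.level) :
    (x (v.trunc m)).level - m = (x v).level - v.level := by
  rw [← v.iterate_parent_eq_trunc hm, map_iterate_parent hx, iterate_parent, level_trunc]
  omega

lemma level_apply (hx : x ∈ IsomOmega q) (v : Vertex q) : (x v).level = v.level + lshift x := by
  obtain ⟨M, hMv, hM0, hM⟩ := v.exists_forall_trunc_eq_zeroVtx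
  have hv := level_apply_trunc_sub hx v hMv
  have h0 := level_apply_trunc_sub hx (zeroVtx q 0) (m := M) hM0
  rw [hM M le_rfl] at hv
  rw [trunc_zeroVtx] at h0
  simp only [lshift, level_zeroVtx] at h0 ⊢
  omega

lemma apply_trunc (hx : x ∈ IsomOmega q) (v : Vertex q) {m : ℤ} (hm : m ≤ v.level) :
    x (v.trunc m) = (x v).trunc (m + lshift x) := by
  rw [← v.iterate_parent_eq_trunc hm, map_iterate_parent hx, iterate_parent, level_apply hx]
  congr 1
  omega

lemma lshift_mul (hx : x ∈ IsomOmega q) (y : Equiv.Perm (Vertex q)) :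
    lshift (x * y) = lshift x + lshift y :=
  (level_apply hx _).trans (add_comm _ _)

lemma lshift_pow (hx : x ∈ IsomOmega q) (n : ℕ) : lshift (x ^ n) = n * lshift x := by
  induction n with
  | zero => simp [lshift]
  | succ n ih =>
    rw [pow_succ, lshift_mul (Subgroup.pow_mem _ hx n), ih]
    push_cast
    ring

lemma apply_zeroVtx_of_le (hx : x ∈ IsomOmega q) {a b m : ℤ}
    (hab : x (zeroVtx q a) = zeroVtx q b) (hm : m ≤ a) :
    x (zeroVtx q m) = zeroVtx q (m + (b - a)) := by
  have hshift : lshift x = b - a := by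
    have := level_apply hx (zeroVtx q a)
    rw [hab, level_zeroVtx, level_zeroVtx] at this
    omega
  rw [← trunc_zeroVtx a m, apply_trunc hx _ hm, hab, trunc_zeroVtx, hshift]

lemma exists_forall_apply_zeroVtx_eq (hx : x ∈ IsomOmega q) (h0 : lshift x = 0) :
    ∃ M ≤ 0, ∀ m ≤ M, x (zeroVtx q m) = zeroVtx q m := by
  obtain ⟨M, -, hM0, hM⟩ := (x (zeroVtx q 0)).exists_forall_trunc_eq_zeroVtx
  refine ⟨M, hM0, fun m hm => ?_⟩
  conv_lhs => rw [← trunc_zeroVtx 0 m]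
  rw [apply_trunc hx _ (by simp; omega), h0, add_zero, hM m hm]

lemma elliptic_iff (hx : x ∈ IsomOmega q) : Elliptic x ↔ lshift x = 0 := by
  constructor
  · rintro ⟨v, hv⟩
    have := level_apply hx v
    rw [hv] at this
    omega
  · intro h0
    obtain ⟨M, -, hM⟩ := exists_forall_apply_zeroVtx_eq hx h0
    exact ⟨zeroVtx q M, hM M le_rfl⟩

lemma pow_apply_zeroVtx (hx : x ∈ IsomOmega q) (h : x (zeroVtx q 0) = zeroVtx q (-1)) (k : ℕ) :
    (x ^ k) (zeroVtx q 0) = zeroVtx q (-k) := by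
  induction k with
  | zero => rfl
  | succ k ih =>
    rw [pow_succ', Equiv.Perm.mul_apply, ih, apply_zeroVtx_of_le hx h (by omega)]
    congr 1
    push_cast
    ring

end IsomOmega

variable {P : Subgroup (Equiv.Perm (Vertex q))}

lemma continuous_lshift : Continuous (lshift : Equiv.Perm (Vertex q) → ℤ) :=
  continuous_def.mpr fun s _ => isOpen_setOf_apply_mem (zeroVtx q 0) {w | w.level ∈ s}

lemma isCompact_stabIn (hP : P ≤ IsomOmega q) (hPc : IsClosed (P : Set (Equiv.Perm (Vertex q))))
    (v : Vertex q) : IsCompact (stabIn P v : Set (Equiv.Perm (Vertex q))) := by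
  choose M hMv hMw hM using v.exists_trunc_eq_trunc
  set O : Vertex q → Set (Vertex q) :=
    fun w => {u | u.level = w.level ∧ u.trunc (M w) = w.trunc (M w)}
  -- `g` fixes `w.trunc (M w) = v.trunc (M w)`, so it maps `w` to a descendant of that vertex
  have hmaps : ∀ g ∈ stabIn P v, ∀ w, g w ∈ O w := by
    rintro g ⟨hgP, hgv⟩ w
    have hg := hP hgP
    have h0 : lshift g = 0 := (IsomOmega.elliptic_iff hg).mp ⟨v, hgv⟩
    refine ⟨by rw [IsomOmega.level_apply hg, h0, add_zero], ?_⟩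
    have hw := IsomOmega.apply_trunc hg w (hMw w)
    have hv := IsomOmega.apply_trunc hg v (hMv w)
    rw [h0, add_zero] at hw hv
    rw [← hw, ← hM w, hv, hgv]
  have hclosed : IsClosed (stabIn P v : Set (Equiv.Perm (Vertex q))) :=
    hPc.inter (isClosed_setOf_apply_eq v v)
  refine (isCompact_setOf_forall_apply_mem O fun w =>
    finite_setOf_level_eq_trunc_eq _ _ _).of_isClosed_subset hclosed fun g hg w => ?_
  exact ⟨hmaps g hg w, hmaps g⁻¹ ((stabIn P v).inv_mem hg) w⟩

lemma lshift_eq_zero_of_isCompact {N : Subgroup (Equiv.Perm (Vertex q))} (hN : N ≤ IsomOmega q)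
    (hc : IsCompact (N : Set (Equiv.Perm (Vertex q)))) {g : Equiv.Perm (Vertex q)} (hg : g ∈ N) :
    lshift g = 0 := by
  obtain ⟨B, hB⟩ := ((hc.image continuous_lshift).finite_of_discrete.image abs).bddAbove
  by_contra h
  have hbound : |lshift (g ^ (B.toNat + 1))| ≤ B :=
    hB (Set.mem_image_of_mem _ (Set.mem_image_of_mem _ (N.pow_mem hg _)))
  rw [IsomOmega.lshift_pow (hN hg), abs_mul, Nat.abs_cast] at hbound
  have h1 : 1 ≤ |lshift g| := Int.one_le_abs h
  have h2 : B ≤ B.toNat := Int.self_le_toNat B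
  push_cast at hbound
  nlinarith

lemma exists_forall_apply_zeroVtx_eq_of_isCompact {K : Set (Equiv.Perm (Vertex q))}
    (hK : IsCompact K) (hKiso : K ⊆ IsomOmega q) (hK0 : ∀ g ∈ K, lshift g = 0) :
    ∃ m, ∀ g ∈ K, g (zeroVtx q m) = zeroVtx q m := by
  obtain ⟨t, ht⟩ := hK.elim_finite_subcover (fun m : ℤ => {g | g (zeroVtx q m) = zeroVtx q m})
    (fun m => isOpen_setOf_apply_eq _ _) fun g hg => by
      obtain ⟨M, -, hM⟩ := IsomOmega.exists_forall_apply_zeroVtx_eq (hKiso hg) (hK0 g hg)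
      exact Set.mem_iUnion.mpr ⟨M, hM M le_rfl⟩
  obtain ⟨m₀, hm₀⟩ := t.bddBelow
  refine ⟨m₀, fun g hg => ?_⟩
  obtain ⟨m, hmt, hgm⟩ := Set.mem_iUnion₂.mp (ht hg)
  simpa using IsomOmega.apply_zeroVtx_of_le (hKiso hg) hgm (hm₀ hmt)

lemma eq_bot_of_isCompact_of_normal (hP : P ≤ IsomOmega q)
    (hPtrans : ∀ v w : Vertex q, ∃ x ∈ P, x v = w) {N : Subgroup (Equiv.Perm (Vertex q))}
    (hNP : N ≤ P) (hNn : ∀ p ∈ P, ∀ g ∈ N, p * g * p⁻¹ ∈ N)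
    (hc : IsCompact (N : Set (Equiv.Perm (Vertex q)))) : N = ⊥ := by
  have hNiso : N ≤ IsomOmega q := hNP.trans hP
  obtain ⟨m, hm⟩ := exists_forall_apply_zeroVtx_eq_of_isCompact hc hNiso
    fun g hg => lshift_eq_zero_of_isCompact hNiso hc hg
  refine (Subgroup.eq_bot_iff_forall N).mpr fun g hg => Equiv.ext fun v => ?_
  obtain ⟨p, hp, rfl⟩ := hPtrans (zeroVtx q m) v
  have hfix := hm _ (by simpa using hNn p⁻¹ (P.inv_mem hp) g hg)
  rw [Equiv.Perm.mul_apply, Equiv.Perm.mul_apply, Equiv.Perm.inv_eq_iff_eq] at hfix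
  exact hfix

variable (q) in
def ellipticSubgroup : Subgroup (Equiv.Perm (Vertex q)) where
  carrier := {g | g ∈ IsomOmega q ∧ Elliptic g}
  one_mem' := ⟨(IsomOmega q).one_mem, zeroVtx q 0, rfl⟩
  mul_mem' := fun {a b} ⟨ha, hea⟩ ⟨hb, heb⟩ => by
    refine ⟨mul_mem ha hb, (IsomOmega.elliptic_iff (mul_mem ha hb)).mpr ?_⟩
    rw [IsomOmega.lshift_mul ha, (IsomOmega.elliptic_iff ha).mp hea,
      (IsomOmega.elliptic_iff hb).mp heb, add_zero]
  inv_mem' := fun ⟨ha, hea⟩ => ⟨inv_mem ha, hea.inv⟩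

lemma coe_inf_ellipticSubgroup (hP : P ≤ IsomOmega q) :
    ((P ⊓ ellipticSubgroup q : Subgroup (Equiv.Perm (Vertex q))) : Set (Equiv.Perm (Vertex q))) =
      {g | g ∈ P ∧ Elliptic g} := by
  ext g
  exact ⟨fun ⟨hgP, _, hge⟩ => ⟨hgP, hge⟩, fun ⟨hgP, hge⟩ => ⟨hgP, hP hgP, hge⟩⟩

lemma isOpen_inf_ellipticSubgroup (hP : P ≤ IsomOmega q) :
    IsOpen {p : P | (p : Equiv.Perm (Vertex q)) ∈ P ⊓ ellipticSubgroup q} := by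
  have hset : {p : P | (p : Equiv.Perm (Vertex q)) ∈ P ⊓ ellipticSubgroup q} =
      Subtype.val ⁻¹' (lshift ⁻¹' {0}) := by
    ext p
    exact ⟨fun h => (IsomOmega.elliptic_iff (hP p.2)).mp h.2.2,
      fun h => ⟨p.2, hP p.2, (IsomOmega.elliptic_iff (hP p.2)).mpr h⟩⟩
  rw [hset]
  exact ((isOpen_discrete _).preimage continuous_lshift).preimage continuous_subtype_val

lemma conj_mem_inf_ellipticSubgroup (hP : P ≤ IsomOmega q) {p g : Equiv.Perm (Vertex q)}
    (hp : p ∈ P) (hg : g ∈ P ⊓ ellipticSubgroup q) : p * g * p⁻¹ ∈ P ⊓ ellipticSubgroup q := by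
  obtain ⟨hgP, hgI, hge⟩ := hg
  exact ⟨P.mul_mem (P.mul_mem hp hgP) (P.inv_mem hp),
    mul_mem (mul_mem (hP hp) hgI) (inv_mem (hP hp)), hge.conj p⟩

lemma conjSub_stabIn_zeroVtx_le (hP : P ≤ IsomOmega q) {x : Equiv.Perm (Vertex q)} (hx : x ∈ P)
    (hxv : x (zeroVtx q (-1)) = zeroVtx q 0) :
    conjSub x (stabIn P (zeroVtx q 0)) ≤ stabIn P (zeroVtx q 0) := by
  rintro _ ⟨g, ⟨hgP, hgv⟩, rfl⟩
  have hxinv : x⁻¹ (zeroVtx q 0) = zeroVtx q (-1) := Equiv.Perm.inv_eq_iff_eq.mpr hxv.symm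
  have hg : g ∈ stabIn P (x⁻¹ (zeroVtx q 0)) := by
    rw [hxinv]
    exact ⟨hgP, by simpa using IsomOmega.apply_zeroVtx_of_le (hP hgP) hgv (by norm_num)⟩
  simpa using (inv_mul_mul_mem_stabIn_iff (P.inv_mem hx)).mpr hg

lemma setOf_exists_zpow_conj_mem_stabIn (hP : P ≤ IsomOmega q) {x : Equiv.Perm (Vertex q)}
    (hx : x ∈ P) (hxv : x (zeroVtx q (-1)) = zeroVtx q 0) :
    {g | ∃ n : ℤ, (x ^ n)⁻¹ * g * x ^ n ∈ stabIn P (zeroVtx q 0)} =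
      {g | g ∈ P ∧ Elliptic g} := by
  ext g
  constructor
  · rintro ⟨n, hn⟩
    obtain ⟨hgP, hgv⟩ := (inv_mul_mul_mem_stabIn_iff (P.zpow_mem hx n)).mp hn
    exact ⟨hgP, _, hgv⟩
  · rintro ⟨hgP, hge⟩
    obtain ⟨M, hM0, hM⟩ := IsomOmega.exists_forall_apply_zeroVtx_eq (hP hgP)
      ((IsomOmega.elliptic_iff (hP hgP)).mp hge)
    have hxinv : x⁻¹ (zeroVtx q 0) = zeroVtx q (-1) := Equiv.Perm.inv_eq_iff_eq.mpr hxv.symm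
    have hxM : (x ^ M) (zeroVtx q 0) = zeroVtx q M := by
      rw [show M = -((-M).toNat : ℤ) by omega, zpow_neg, zpow_natCast, ← inv_pow,
        IsomOmega.pow_apply_zeroVtx (inv_mem (hP hx)) hxinv]
    refine ⟨M, (inv_mul_mul_mem_stabIn_iff (P.zpow_mem hx M)).mpr ⟨hgP, ?_⟩⟩
    rw [hxM]
    exact hM M le_rfl

end Scale

open Scale in
theorem statement_13_general (q : ℕ) [NeZero q]
    (P : Subgroup (Equiv.Perm (Vertex q))) (hP : IsScaleGroup P) :
    (∀ N : Subgroup (Equiv.Perm (Vertex q)), N ≤ P →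
      (∀ p ∈ P, ∀ g ∈ N, p * g * p⁻¹ ∈ N) →
      IsCompact (N : Set (Equiv.Perm (Vertex q))) → N = ⊥) ∧
    (∃ Pe : Subgroup (Equiv.Perm (Vertex q)),
      (Pe : Set (Equiv.Perm (Vertex q))) = {g | g ∈ P ∧ Elliptic g} ∧
      Pe ≤ P ∧
      IsOpen {p : P | (p : Equiv.Perm (Vertex q)) ∈ Pe} ∧
      (∀ p ∈ P, ∀ g ∈ Pe, p * g * p⁻¹ ∈ Pe) ∧
      (∀ p ∈ P, ∀ p' ∈ P, lshift (p * p') = lshift p + lshift p') ∧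
      (∀ k : ℤ, ∃ p ∈ P, lshift p = k) ∧
      (∀ p ∈ P, (lshift p = 0 ↔ Elliptic p))) ∧
    (IsCompact ((stabIn P (zeroVtx q 0) : Subgroup (Equiv.Perm (Vertex q))) :
        Set (Equiv.Perm (Vertex q))) ∧
      IsOpen {p : P | (p : Equiv.Perm (Vertex q)) ∈ stabIn P (zeroVtx q 0)} ∧
      ∃ x ∈ P, conjSub x (stabIn P (zeroVtx q 0)) ≤ stabIn P (zeroVtx q 0) ∧
        {g : Equiv.Perm (Vertex q) |
            ∃ n : ℤ, (x ^ n)⁻¹ * g * x ^ n ∈ stabIn P (zeroVtx q 0)} =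
          {g : Equiv.Perm (Vertex q) | g ∈ P ∧ Elliptic g}) := by
  obtain ⟨hPiso, hPclosed, hPtrans⟩ := hP
  obtain ⟨x, hx, hxv⟩ := hPtrans (zeroVtx q (-1)) (zeroVtx q 0)
  refine ⟨fun N hNP hNn hNc => eq_bot_of_isCompact_of_normal hPiso hPtrans hNP hNn hNc,
    ⟨P ⊓ ellipticSubgroup q, coe_inf_ellipticSubgroup hPiso, inf_le_left,
      isOpen_inf_ellipticSubgroup hPiso, fun p hp _ => conj_mem_inf_ellipticSubgroup hPiso hp,
      fun p hp p' _ => IsomOmega.lshift_mul (hPiso hp) p', fun k => ?_,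
      fun p hp => (IsomOmega.elliptic_iff (hPiso hp)).symm⟩,
    isCompact_stabIn hPiso hPclosed _, isOpen_stabIn _,
    x, hx, conjSub_stabIn_zeroVtx_le hPiso hx hxv, setOf_exists_zpow_conj_mem_stabIn hPiso hx hxv⟩
  obtain ⟨p, hp, hpk⟩ := hPtrans (zeroVtx q 0) (zeroVtx q k)
  exact ⟨p, hp, congrArg Vertex.level hpk⟩

open Scale in
/-- A scale group `P` has no non-trivial compact normal subgroup; its
elliptic part is an open normal subgroup which is the kernel of the surjective
level-shift homomorphism onto `ℤ`; and the stabiliser `V` of `ṽ₀` is a compact open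
subgroup with a conjugating element `x` whose conjugates of `V` exhaust the elliptic
part. -/
theorem statement_13 (q : ℕ) [NeZero q] (hq : 2 ≤ q)
    (P : Subgroup (Equiv.Perm (Vertex q))) (hP : IsScaleGroup P) :
    (∀ N : Subgroup (Equiv.Perm (Vertex q)), N ≤ P →
      (∀ p ∈ P, ∀ g ∈ N, p * g * p⁻¹ ∈ N) →
      IsCompact (N : Set (Equiv.Perm (Vertex q))) → N = ⊥) ∧
    (∃ Pe : Subgroup (Equiv.Perm (Vertex q)),
      (Pe : Set (Equiv.Perm (Vertex q))) = {g | g ∈ P ∧ Elliptic g} ∧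
      Pe ≤ P ∧
      IsOpen {p : P | (p : Equiv.Perm (Vertex q)) ∈ Pe} ∧
      (∀ p ∈ P, ∀ g ∈ Pe, p * g * p⁻¹ ∈ Pe) ∧
      (∀ p ∈ P, ∀ p' ∈ P, lshift (p * p') = lshift p + lshift p') ∧
      (∀ k : ℤ, ∃ p ∈ P, lshift p = k) ∧
      (∀ p ∈ P, (lshift p = 0 ↔ Elliptic p))) ∧
    (IsCompact ((stabIn P (zeroVtx q 0) : Subgroup (Equiv.Perm (Vertex q))) :
        Set (Equiv.Perm (Vertex q))) ∧
      IsOpen {p : P | (p : Equiv.Perm (Vertex q)) ∈ stabIn P (zeroVtx q 0)} ∧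
      ∃ x ∈ P, conjSub x (stabIn P (zeroVtx q 0)) ≤ stabIn P (zeroVtx q 0) ∧
        {g : Equiv.Perm (Vertex q) |
            ∃ n : ℤ, (x ^ n)⁻¹ * g * x ^ n ∈ stabIn P (zeroVtx q 0)} =
          {g : Equiv.Perm (Vertex q) | g ∈ P ∧ Elliptic g}) :=
  statement_13_general q P hP
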